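/- Let n, k be integers with k ≥ 1, and let γ be a real number with 0 < γ and k < n/2 − γ; set a₀ = (n−k−2)/2. Then for every real a ≥ a₀, the function b ↦ Θʳ(γ,a,b) is strictly increasing on the interval [0, ∞). -/

import Mathlib

/-!
By Euler's limit formula `|Γ(x+iy)|² = lim n^{2x} n!² / ∏_{j ≤ n} ((x+j)² + y²)`, so for
`0 < q < p` the ratio `|Γ(p+iy)|² / |Γ(q+iy)|²` is a limit of constants times products of the
factors `((q+j)² + y²) / ((p+j)² + y²)`, each increasing in `y ≥ 0`; hence the ratio is weakly
increasing. Strictness comes from `Γ(z+1) = zΓ(z)`, which writes the ratio as the ratio for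
`(p+1, q+1)` times the strictly increasing factor `(q² + y²) / (p² + y²)`. Finally `Θʳ(γ,a,b)` is
`4^γ` times this ratio at `p = (1+γ+a)/2`, `q = (1-γ+a)/2`, `y = b/2`, and the hypotheses give
`q > k/2 > 0`.
-/

/-- The Fourier symbol `Θ(a,b)` at a real argument `b`:
`Θʳ(γ,a,b) = 4^γ · ‖Γ_ℂ((1+γ+a)/2 + (b/2)i)‖² / ‖Γ_ℂ((1−γ+a)/2 + (b/2)i)‖²`. -/
noncomputable def ThetaR (γ a b : ℝ) : ℝ :=
  (4 : ℝ) ^ γ * ‖Complex.Gamma (((1 + γ + a) / 2 : ℝ) + (b / 2 : ℝ) * Complex.I)‖ ^ 2 /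
    ‖Complex.Gamma (((1 - γ + a) / 2 : ℝ) + (b / 2 : ℝ) * Complex.I)‖ ^ 2

open Complex Filter Finset Topology
open scoped Nat

lemma norm_sq_ofReal_add_mul_I_add_natCast (x y : ℝ) (j : ℕ) :
    ‖(x + y * I + j : ℂ)‖ ^ 2 = (x + j) ^ 2 + y ^ 2 := by
  rw [Complex.sq_norm, ← normSq_add_mul_I]
  push_cast
  ring_nf

lemma norm_GammaSeq_sq (x y : ℝ) {n : ℕ} (hn : n ≠ 0) :
    ‖GammaSeq (x + y * I) n‖ ^ 2 =
      ((n : ℝ) ^ x * n !) ^ 2 / ∏ j ∈ range (n + 1), ((x + j) ^ 2 + y ^ 2) := by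
  rw [GammaSeq, norm_div, norm_mul, norm_natCast_cpow_of_pos (Nat.pos_of_ne_zero hn), norm_prod,
    div_pow, ← prod_pow]
  simp [norm_sq_ofReal_add_mul_I_add_natCast]

lemma add_mul_add_le_add_mul_add {u v s t : ℝ} (huv : u ≤ v) (hst : s ≤ t) :
    (v + t) * (u + s) ≤ (v + s) * (u + t) := by
  nlinarith [mul_nonneg (sub_nonneg.2 huv) (sub_nonneg.2 hst)]

lemma prod_sq_add_mul_le {p q s t : ℝ} (hq : 0 ≤ q) (hqp : q ≤ p) (hs : 0 ≤ s) (hst : s ≤ t)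
    (n : ℕ) :
    (∏ j ∈ range n, ((p + j) ^ 2 + t)) * ∏ j ∈ range n, ((q + j) ^ 2 + s) ≤
      (∏ j ∈ range n, ((p + j) ^ 2 + s)) * ∏ j ∈ range n, ((q + j) ^ 2 + t) := by
  simp only [← prod_mul_distrib]
  have ht := hs.trans hst
  refine prod_le_prod (fun j _ ↦ by positivity) fun j _ ↦ add_mul_add_le_add_mul_add ?_ hst
  exact pow_le_pow_left₀ (by positivity) (by linarith) 2

lemma norm_GammaSeq_sq_mul_le {p q y₁ y₂ : ℝ} (hq : 0 < q) (hqp : q ≤ p) (hy₁ : 0 ≤ y₁)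
    (hy : y₁ ≤ y₂) {n : ℕ} (hn : n ≠ 0) :
    ‖GammaSeq (p + y₁ * I) n‖ ^ 2 * ‖GammaSeq (q + y₂ * I) n‖ ^ 2 ≤
      ‖GammaSeq (p + y₂ * I) n‖ ^ 2 * ‖GammaSeq (q + y₁ * I) n‖ ^ 2 := by
  simp only [norm_GammaSeq_sq _ _ hn, div_mul_div_comm]
  have hpos : ∀ x y : ℝ, 0 < x → 0 < ∏ j ∈ range (n + 1), ((x + j) ^ 2 + y ^ 2) :=
    fun x y hx ↦ prod_pos fun j _ ↦ by positivity
  have hp := hq.trans_le hqp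
  exact div_le_div_of_nonneg_left (by positivity) (mul_pos (hpos _ _ hp) (hpos _ _ hq))
    (prod_sq_add_mul_le hq.le hqp (sq_nonneg _) (pow_le_pow_left₀ hy₁ hy 2) _)

lemma norm_Gamma_sq_mul_le {p q y₁ y₂ : ℝ} (hq : 0 < q) (hqp : q ≤ p) (hy₁ : 0 ≤ y₁)
    (hy : y₁ ≤ y₂) :
    ‖Gamma (p + y₁ * I)‖ ^ 2 * ‖Gamma (q + y₂ * I)‖ ^ 2 ≤
      ‖Gamma (p + y₂ * I)‖ ^ 2 * ‖Gamma (q + y₁ * I)‖ ^ 2 := by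
  have h (x y : ℝ) : Tendsto (fun n ↦ ‖GammaSeq (x + y * I) n‖ ^ 2) atTop
      (𝓝 (‖Gamma (x + y * I)‖ ^ 2)) :=
    (GammaSeq_tendsto_Gamma _).norm.pow 2
  refine le_of_tendsto_of_tendsto ((h p y₁).mul (h q y₂)) ((h p y₂).mul (h q y₁)) ?_
  filter_upwards [eventually_ne_atTop 0] with n hn
  exact norm_GammaSeq_sq_mul_le hq hqp hy₁ hy hn

lemma norm_Gamma_add_one_sq {x : ℝ} (hx : 0 < x) (y : ℝ) :
    ‖Gamma (↑(x + 1) + y * I)‖ ^ 2 = (x ^ 2 + y ^ 2) * ‖Gamma (x + y * I)‖ ^ 2 := by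
  have hne : (x + y * I : ℂ) ≠ 0 := fun h ↦ by simpa [hx.ne'] using congrArg re h
  rw [show (↑(x + 1) + y * I : ℂ) = x + y * I + 1 by push_cast; ring, Gamma_add_one _ hne,
    norm_mul, mul_pow, Complex.sq_norm, normSq_add_mul_I]

lemma norm_Gamma_sq_pos {x : ℝ} (hx : 0 < x) (y : ℝ) : 0 < ‖Gamma (x + y * I)‖ ^ 2 := by
  refine pow_pos (norm_pos_iff.2 (Gamma_ne_zero_of_re_pos ?_)) 2
  simpa using hx

lemma norm_Gamma_sq_mul_lt {p q y₁ y₂ : ℝ} (hq : 0 < q) (hqp : q < p) (hy₁ : 0 ≤ y₁)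
    (hy : y₁ < y₂) :
    ‖Gamma (p + y₁ * I)‖ ^ 2 * ‖Gamma (q + y₂ * I)‖ ^ 2 <
      ‖Gamma (p + y₂ * I)‖ ^ 2 * ‖Gamma (q + y₁ * I)‖ ^ 2 := by
  have hp := hq.trans hqp
  have hshift := norm_Gamma_sq_mul_le (by linarith : 0 < q + 1) (by linarith : q + 1 ≤ p + 1)
    hy₁ hy.le
  rw [norm_Gamma_add_one_sq hp, norm_Gamma_add_one_sq hp, norm_Gamma_add_one_sq hq,
    norm_Gamma_add_one_sq hq] at hshift
  have hrat : (p ^ 2 + y₂ ^ 2) * (q ^ 2 + y₁ ^ 2) < (p ^ 2 + y₁ ^ 2) * (q ^ 2 + y₂ ^ 2) := by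
    nlinarith [mul_pos (sub_pos.2 (pow_lt_pow_left₀ hqp hq.le two_ne_zero))
      (sub_pos.2 (pow_lt_pow_left₀ hy hy₁ two_ne_zero))]
  have hpos := mul_pos (norm_Gamma_sq_pos hp y₂) (norm_Gamma_sq_pos hq y₁)
  refine lt_of_mul_lt_mul_right (a := (p ^ 2 + y₁ ^ 2) * (q ^ 2 + y₂ ^ 2)) ?_ (by positivity)
  calc _ = _ := by ring
    _ ≤ _ := hshift
    _ < _ := by nlinarith

lemma strictMonoOn_norm_Gamma_sq_div {p q : ℝ} (hq : 0 < q) (hqp : q < p) :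
    StrictMonoOn (fun y : ℝ ↦ ‖Gamma (p + y * I)‖ ^ 2 / ‖Gamma (q + y * I)‖ ^ 2) (Set.Ici 0) := by
  intro y₁ hy₁ y₂ _ hy
  rw [div_lt_div_iff₀ (norm_Gamma_sq_pos hq y₁) (norm_Gamma_sq_pos hq y₂)]
  exact norm_Gamma_sq_mul_lt hq hqp hy₁ hy

theorem stmt3 (n k : ℤ) (hk : 1 ≤ k) (γ : ℝ) (hγ : 0 < γ)
    (hkn : (k : ℝ) < (n : ℝ) / 2 - γ) :
    ∀ a : ℝ, ((n : ℝ) - (k : ℝ) - 2) / 2 ≤ a →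
      StrictMonoOn (fun b : ℝ => ThetaR γ a b) (Set.Ici 0) := by
  intro a ha b₁ hb₁ b₂ hb₂ hb
  have hk' : (1 : ℝ) ≤ k := mod_cast hk
  have hratio := strictMonoOn_norm_Gamma_sq_div (p := (1 + γ + a) / 2) (q := (1 - γ + a) / 2)
    (by linarith) (by linarith)
  simp only [ThetaR, mul_div_assoc]
  have halve {b : ℝ} (h : b ∈ Set.Ici 0) : b / 2 ∈ Set.Ici 0 := div_nonneg h zero_le_two
  exact mul_lt_mul_of_pos_left (hratio (halve hb₁) (halve hb₂) (by linarith)) (by positivity)
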